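/- arXiv:1811.06800 — 2 statements merged into one kernel-verified Lean document; each statement's English description precedes it below -/
import Mathlib

section
/- Let E be a complex Banach space, r* > 0, and let g : ℂ → E be analytic on an open set containing the closed ball B̄(0, r*). Fix h₀ with 0 < h₀ < r*. Then there exists a constant κ > 0, independent of h, such that for all h ∈ (0, h₀] and all j ≥ 0, ‖∫_0^1 P_j(c) g(ch) dc‖ ≤ κ · √(2j+1) · (h/r*)^j. -/
/-!
By Rodrigues' formula, `j` integrations by parts move all derivatives from `(c² - c)^j` onto
`c ↦ g(ch)`; the boundary terms vanish since `(c² - c)^j` has roots of order `j` at `0` and `1`.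
What is left is, up to the factor `√(2j+1)/j!`, an integral of `(c - c²)^j h^j g^{(j)}(ch)`.
Cauchy's estimate on the disc of radius `r* - ch` about `ch` bounds `‖g^{(j)}(ch)‖` by
`j! M / (r* - ch)^j`, and `(c - c²) h / (r* - ch) ≤ h / r*` for `c ∈ [0,1]`.
-/

open Polynomial intervalIntegral Metric Set
open scoped Interval Nat

noncomputable def legendreP (j : ℕ) : ℝ → ℝ :=
  fun x => (Real.sqrt (2 * (j : ℝ) + 1) / (Nat.factorial j : ℝ)) *
    iteratedDeriv j (fun y : ℝ => (y ^ 2 - y) ^ j) x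

theorem Polynomial.iteratedDeriv_eval (p : ℝ[X]) (n : ℕ) :
    iteratedDeriv n (fun x => p.eval x) = fun x => (derivative^[n] p).eval x := by
  induction n with
  | zero => rfl
  | succ n ih =>
    rw [iteratedDeriv_succ, ih, Function.iterate_succ_apply']
    ext x
    exact Polynomial.deriv _

theorem Polynomial.isRoot_iterate_derivative_pow {R : Type*} [CommRing R] {p : R[X]} {a : R}
    (hp : p.IsRoot a) {n i : ℕ} (hi : i < n) : (derivative^[i] (p ^ n)).IsRoot a := by
  obtain ⟨q, hq⟩ := pow_sub_dvd_iterate_derivative_pow p n i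
  simp [hq, hp.eq_zero, Nat.sub_ne_zero_of_lt hi]

theorem legendreP_eq_eval (j : ℕ) (x : ℝ) :
    legendreP j x = √(2 * j + 1) / j ! * (derivative^[j] ((X ^ 2 - X) ^ j)).eval x := by
  have : (fun y : ℝ => (y ^ 2 - y) ^ j) = fun y => ((X ^ 2 - X) ^ j : ℝ[X]).eval y := by
    simp
  rw [legendreP, this, Polynomial.iteratedDeriv_eval]

section IntegrationByParts

variable {E : Type*} [NormedAddCommGroup E] [NormedSpace ℝ E] [CompleteSpace E] {a b : ℝ}

theorem intervalIntegral.integral_derivative_smul_eq_neg {p : ℝ[X]} {f f' : ℝ → E}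
    (ha : p.IsRoot a) (hb : p.IsRoot b) (hf : ∀ x ∈ [[a, b]], HasDerivAt f (f' x) x)
    (hf' : ContinuousOn f' [[a, b]]) :
    ∫ x in a..b, (derivative p).eval x • f x = -∫ x in a..b, p.eval x • f' x := by
  rw [integral_smul_deriv_eq_deriv_smul (fun x _ => p.hasDerivAt x) hf
    (p.derivative.continuous.intervalIntegrable a b) (hf'.intervalIntegrable),
    ha.eq_zero, hb.eq_zero]
  simp

theorem intervalIntegral.integral_iterate_derivative_smul (F : ℕ → ℝ → E)
    (hF : ∀ i, ∀ x ∈ [[a, b]], HasDerivAt (F i) (F (i + 1) x) x) (n : ℕ) (p : ℝ[X])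
    (hp : ∀ i < n, (derivative^[i] p).IsRoot a ∧ (derivative^[i] p).IsRoot b) :
    ∫ x in a..b, (derivative^[n] p).eval x • F 0 x =
      (-1 : ℝ) ^ n • ∫ x in a..b, p.eval x • F n x := by
  induction n generalizing p with
  | zero => simp
  | succ n ih =>
    have hF' : ContinuousOn (F (n + 1)) [[a, b]] :=
      fun x hx => (hF (n + 1) x hx).continuousAt.continuousWithinAt
    obtain ⟨ha, hb⟩ : p.IsRoot a ∧ p.IsRoot b := hp 0 n.succ_pos
    rw [Function.iterate_succ_apply, ih _ fun i hi => hp (i + 1) (by omega),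
      integral_derivative_smul_eq_neg ha hb (hF n) hF',
      pow_succ, mul_neg_one, neg_smul, smul_neg]

end IntegrationByParts

theorem sub_sq_mul_div_sub_mul_le_div {x h r : ℝ} (hx : x ∈ Icc (0 : ℝ) 1) (hh : 0 ≤ h)
    (hhr : h < r) : (x - x ^ 2) * h / (r - x * h) ≤ h / r := by
  obtain ⟨hx0, hx1⟩ := hx
  have hxh : x * h ≤ x * r := mul_le_mul_of_nonneg_left hhr.le hx0
  rw [div_le_div_iff₀ (by nlinarith) (by linarith)]
  nlinarith [mul_nonneg hh (sub_nonneg.2 hxh),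
    mul_nonneg (mul_nonneg hh (hh.trans hhr.le)) (sq_nonneg (1 - x))]

section Complex

variable {E : Type*} [NormedAddCommGroup E] [NormedSpace ℂ E]

theorem norm_iteratedDeriv_le_of_mem_ball [CompleteSpace E] {g : ℂ → E} {c z : ℂ} {r M : ℝ}
    (hg : DifferentiableOn ℂ g (closedBall c r)) (hM : ∀ w ∈ closedBall c r, ‖g w‖ ≤ M)
    (hz : z ∈ ball c r) (n : ℕ) :
    ‖iteratedDeriv n g z‖ ≤ n ! * M / (r - dist z c) ^ n := by
  have hsub : closedBall z (r - dist z c) ⊆ closedBall c r :=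
    closedBall_subset_closedBall' (by simp)
  exact Complex.norm_iteratedDeriv_le_of_forall_mem_sphere_norm_le n (sub_pos.2 hz)
    (hg.diffContOnCl_ball hsub) fun w hw => hM w (hsub (sphere_subset_closedBall hw))

theorem hasDerivAt_smul_iteratedDeriv_comp_ofReal_mul {g : ℂ → E} {c : ℂ} {i : ℕ} {x : ℝ}
    (hg : DifferentiableAt ℂ (iteratedDeriv i g) (x * c)) :
    HasDerivAt (fun y : ℝ => c ^ i • iteratedDeriv i g (y * c))
      (c ^ (i + 1) • iteratedDeriv (i + 1) g (x * c)) x := by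
  have hmul : HasDerivAt (fun y : ℝ => (y : ℂ) * c) c x := by
    simpa using Complex.ofRealCLM.hasDerivAt.mul_const c
  rw [iteratedDeriv_succ, pow_succ, mul_smul]
  exact (hg.hasDerivAt.scomp x hmul).const_smul (c ^ i)

variable [CompleteSpace E] {g : ℂ → E} {r M h : ℝ}

theorem sub_sq_pow_mul_norm_iteratedDeriv_le (hg : DifferentiableOn ℂ g (closedBall 0 r))
    (hM : ∀ z ∈ closedBall (0 : ℂ) r, ‖g z‖ ≤ M) (hh : 0 ≤ h) (hhr : h < r) {x : ℝ}
    (hx : x ∈ Icc (0 : ℝ) 1) (j : ℕ) :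
    (x - x ^ 2) ^ j * (h ^ j * ‖iteratedDeriv j g (x * h)‖) ≤ j ! * M * (h / r) ^ j := by
  obtain ⟨hx0, hx1⟩ := hx
  have hx2 : 0 ≤ x - x ^ 2 := by nlinarith
  have hxh : 0 < r - x * h := by nlinarith
  have hM0 : 0 ≤ M := (norm_nonneg _).trans (hM 0 (by simpa using hh.trans hhr.le))
  have hnorm : ‖(x : ℂ) * h‖ = x * h := by
    rw [norm_mul, Complex.norm_real, Complex.norm_real, Real.norm_of_nonneg hx0,
      Real.norm_of_nonneg hh]
  have hCauchy := norm_iteratedDeriv_le_of_mem_ball hg hM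
    (by rw [mem_ball_zero_iff, hnorm]; nlinarith) j
  rw [dist_zero_right, hnorm] at hCauchy
  calc (x - x ^ 2) ^ j * (h ^ j * ‖iteratedDeriv j g (x * h)‖)
      ≤ (x - x ^ 2) ^ j * (h ^ j * (j ! * M / (r - x * h) ^ j)) := by gcongr
    _ = j ! * M * ((x - x ^ 2) * h / (r - x * h)) ^ j := by rw [div_pow, mul_pow]; ring
    _ ≤ j ! * M * (h / r) ^ j := by
        have hfrac : 0 ≤ (x - x ^ 2) * h / (r - x * h) := by positivity
        gcongr _ * ?_ ^ _
        exact sub_sq_mul_div_sub_mul_le_div ⟨hx0, hx1⟩ hh hhr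

theorem norm_integral_legendreP_smul_le (hg : AnalyticOnNhd ℂ g (closedBall 0 r))
    (hM : ∀ z ∈ closedBall (0 : ℂ) r, ‖g z‖ ≤ M) (hh : 0 ≤ h) (hhr : h < r) (j : ℕ) :
    ‖∫ c in (0 : ℝ)..1, legendreP j c • g (c * h)‖ ≤ M * √(2 * j + 1) * (h / r) ^ j := by
  set W : ℝ[X] := (X ^ 2 - X) ^ j
  set F : ℕ → ℝ → E := fun i x => (h : ℂ) ^ i • iteratedDeriv i g (x * h)
  have hF : ∀ i, ∀ x ∈ [[(0 : ℝ), 1]], HasDerivAt (F i) (F (i + 1) x) x := fun i x hx => by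
    rw [uIcc_of_le zero_le_one] at hx
    have hxh : (x : ℂ) * h ∈ closedBall (0 : ℂ) r := by
      rw [mem_closedBall_zero_iff, norm_mul, Complex.norm_real, Complex.norm_real,
        Real.norm_of_nonneg hx.1, Real.norm_of_nonneg hh]
      nlinarith [hx.1, hx.2]
    have hanalytic := hg.iterated_deriv i _ hxh
    rw [← iteratedDeriv_eq_iterate] at hanalytic
    exact hasDerivAt_smul_iteratedDeriv_comp_ofReal_mul hanalytic.differentiableAt
  have hW : ∀ i < j, (derivative^[i] W).IsRoot 0 ∧ (derivative^[i] W).IsRoot 1 := fun i hi =>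
    ⟨isRoot_iterate_derivative_pow (by simp) hi, isRoot_iterate_derivative_pow (by simp) hi⟩
  have hpt : ∀ x ∈ Ι (0 : ℝ) 1, ‖W.eval x • F j x‖ ≤ j ! * M * (h / r) ^ j := fun x hx => by
    rw [uIoc_of_le zero_le_one] at hx
    have hx2 : x ^ 2 - x ≤ 0 := by nlinarith [hx.1, hx.2]
    simpa [W, F, norm_smul, abs_of_nonneg hh, abs_of_nonpos hx2] using
      sub_sq_pow_mul_norm_iteratedDeriv_le hg.differentiableOn hM hh hhr
        (Ioc_subset_Icc_self hx) j
  have hF0 : ∀ x : ℝ, g (x * h) = F 0 x := fun x => by simp [F]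
  calc ‖∫ c in (0 : ℝ)..1, legendreP j c • g (c * h)‖
      = √(2 * j + 1) / j ! * ‖∫ x in (0 : ℝ)..1, W.eval x • F j x‖ := by
        simp_rw [legendreP_eq_eval, mul_smul, hF0]
        rw [integral_smul, integral_iterate_derivative_smul F hF j W hW, norm_smul, norm_smul,
          norm_pow, norm_neg, norm_one, one_pow, one_mul, Real.norm_of_nonneg (by positivity)]
    _ ≤ √(2 * j + 1) / j ! * (j ! * M * (h / r) ^ j) := by
        gcongr
        simpa using norm_integral_le_of_norm_le_const hpt
    _ = M * √(2 * j + 1) * (h / r) ^ j := by field_simp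

end Complex

theorem fourier_coeff_uniform_bound_general
    {E : Type*} [NormedAddCommGroup E] [NormedSpace ℂ E] [CompleteSpace E]
    (rstar : ℝ) (g : ℂ → E)
    (U : Set ℂ) (hball : Metric.closedBall (0:ℂ) rstar ⊆ U)
    (hg : ∀ z ∈ U, AnalyticAt ℂ g z)
    (h₀ : ℝ) (hh₀r : h₀ < rstar) :
    ∃ κ > 0, ∀ h ∈ Set.Ioc (0:ℝ) h₀, ∀ j : ℕ,
      ‖∫ c in (0:ℝ)..1, legendreP j c • g ((c : ℂ) * (h : ℂ))‖ ≤
        κ * Real.sqrt (2 * (j : ℝ) + 1) * (h / rstar) ^ j := by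
  have hg' : AnalyticOnNhd ℂ g (closedBall 0 rstar) := fun z hz => hg z (hball hz)
  obtain ⟨M, hM⟩ := (isCompact_closedBall (0 : ℂ) rstar).exists_bound_of_continuousOn
    hg'.continuousOn
  refine ⟨max M 1, by positivity, fun h ⟨hh, hhh₀⟩ j => ?_⟩
  have hhr : h < rstar := hhh₀.trans_lt hh₀r
  calc _ ≤ M * √(2 * j + 1) * (h / rstar) ^ j :=
        norm_integral_legendreP_smul_le hg' hM hh.le hhr j
    _ ≤ max M 1 * √(2 * j + 1) * (h / rstar) ^ j := by
        have : 0 ≤ h / rstar := div_nonneg hh.le (hh.trans hhr).le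
        gcongr
        exact le_max_left M 1

/-- The `h`-uniform form of Theorem 2.5: if `g` is analytic on an open set containing
`B̄(0, r*)` and `0 < h₀ < r*`, then there is `κ > 0`, independent of `h`, with
`‖∫_0^1 P_j(c) g(ch) dc‖ ≤ κ √(2j+1) (h/r*)^j` for all `h ∈ (0, h₀]` and all `j`. -/
theorem fourier_coeff_uniform_bound
    {E : Type*} [NormedAddCommGroup E] [NormedSpace ℂ E] [CompleteSpace E]
    (rstar : ℝ) (hr : 0 < rstar) (g : ℂ → E)
    (U : Set ℂ) (hU : IsOpen U) (hball : Metric.closedBall (0:ℂ) rstar ⊆ U)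
    (hg : ∀ z ∈ U, AnalyticAt ℂ g z)
    (h₀ : ℝ) (hh₀ : 0 < h₀) (hh₀r : h₀ < rstar) :
    ∃ κ > 0, ∀ h ∈ Set.Ioc (0:ℝ) h₀, ∀ j : ℕ,
      ‖∫ c in (0:ℝ)..1, legendreP j c • g ((c : ℂ) * (h : ℂ))‖ ≤
        κ * Real.sqrt (2 * (j : ℝ) + 1) * (h / rstar) ^ j :=
  fourier_coeff_uniform_bound_general rstar g U hball hg h₀ hh₀r
end

section
/- Under the hypotheses (i)–(v) of the preceding uniform-error statement (with F, Φ, σ, y, γ_j(σ), κ, ρ as there), assume in addition that there exist κ₁ > 0 and ρ₁ > 1 such that ‖∫_0^1 P_j(τ) Φ(h, τh) dτ‖ ≤ κ₁ √(2j+1) ρ₁^{−j} for all j ≥ 0 (operator norm of the Bochner integral in L(E,E)). Then ‖σ(h) − y(h)‖ ≤ h κ κ₁ Σ_{j=s}^∞ (2j+1) (ρ ρ₁)^{−j}. -/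
lemma legendreP_continuous (j : ℕ) : Continuous (legendreP j) := by
  have h1 : ContDiff ℝ (⊤ : ℕ∞) (fun y : ℝ => (y ^ 2 - y) ^ j) :=
    (((contDiff_id (𝕜 := ℝ)).pow 2).sub contDiff_id).pow j
  exact continuous_const.mul (h1.continuous_iteratedDeriv j (mod_cast le_top))

lemma legendreP_primitive_hasDerivAt (j : ℕ) (c : ℝ) :
    HasDerivAt (fun u : ℝ => ∫ x in (0:ℝ)..u, legendreP j x) (legendreP j c) c :=
  intervalIntegral.integral_hasDerivAt_right
    ((legendreP_continuous j).intervalIntegrable _ _)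
    ((legendreP_continuous j).stronglyMeasurableAtFilter _ _)
    (legendreP_continuous j).continuousAt

/-- Second statement of Theorem 2.6 (super-convergence at `t = h`): under the hypotheses
of the uniform-error statement, if moreover the Fourier coefficients of the propagator
satisfy `‖∫_0^1 P_j(τ) Φ(h, τh) dτ‖ ≤ κ₁ √(2j+1) ρ₁^{-j}`, then
`‖σ(h) - y(h)‖ ≤ h κ κ₁ Σ_{j=s}^∞ (2j+1) (ρρ₁)^{-j}`. -/
theorem shbvm_superconvergence_bound
    {E : Type*} [NormedAddCommGroup E] [NormedSpace ℝ E] [CompleteSpace E]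
    (f : E → E) (hf : Continuous f) (y₀ : E) (h : ℝ) (hh : 0 < h) (s : ℕ) (hs : 1 ≤ s)
    (F : ℝ → ℝ → E → E) (Φ : ℝ × ℝ → E →L[ℝ] E) (hΦ : Continuous Φ)
    (σ : ℝ → E) (hσ : ContDiff ℝ 1 σ) (hσ0 : σ 0 = y₀)
    (y : ℝ → E) (hy : ∀ t, y t = F t 0 y₀)
    (γ : ℕ → E) (hγ : ∀ j : ℕ, γ j = ∫ τ in (0:ℝ)..1, legendreP j τ • f (σ (τ * h)))
    (hFid : ∀ tb ∈ Set.Icc (0:ℝ) h, ∀ η : E, F tb tb η = η)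
    (hFderiv : ∀ tb ∈ Set.Icc (0:ℝ) h, ∀ t ∈ Set.Icc (0:ℝ) tb,
      HasFDerivAt (fun p : ℝ × E => F tb p.1 p.2)
        ((Φ (tb, t)).comp (ContinuousLinearMap.snd ℝ ℝ E) -
          (ContinuousLinearMap.fst ℝ ℝ E).smulRight (Φ (tb, t) (f (σ t))))
        (t, σ t))
    (hσeq : ∀ c ∈ Set.Icc (0:ℝ) 1,
      σ (c * h) = y₀ + h • ∑ j ∈ Finset.range s, (∫ x in (0:ℝ)..c, legendreP j x) • γ j)
    (hunif : TendstoUniformlyOn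
      (fun n : ℕ => fun τ : ℝ => ∑ j ∈ Finset.range n, legendreP j τ • γ j)
      (fun τ : ℝ => f (σ (τ * h))) Filter.atTop (Set.Icc (0:ℝ) 1))
    (κ ρ : ℝ) (hκ : 0 < κ) (hρ : 1 < ρ)
    (hγbound : ∀ j : ℕ, ‖γ j‖ ≤ κ * Real.sqrt (2 * (j : ℝ) + 1) / ρ ^ j)
    (κ₁ ρ₁ : ℝ) (hκ₁ : 0 < κ₁) (hρ₁ : 1 < ρ₁)
    (hΦbound : ∀ j : ℕ,
      ‖∫ τ in (0:ℝ)..1, legendreP j τ • Φ (h, τ * h)‖ ≤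
        κ₁ * Real.sqrt (2 * (j : ℝ) + 1) / ρ₁ ^ j) :
    ‖σ h - y h‖ ≤ h * κ * κ₁ * ∑' j : ℕ, (2 * ((s : ℝ) + j) + 1) / (ρ * ρ₁) ^ (s + j) := by
  have hσdiff : Differentiable ℝ σ := hσ.differentiable one_ne_zero
  have hvcont : Continuous (deriv σ) := hσ.continuous_deriv le_rfl
  -- Step E: derivative of σ on the interval
  have hvE : ∀ c ∈ Set.Icc (0:ℝ) 1,
      deriv σ (c * h) = ∑ j ∈ Finset.range s, legendreP j c • γ j := by
    intro c hc
    have hφ : ∀ x : ℝ, HasDerivAt (fun u => σ (u * h)) (h • deriv σ (x * h)) x := by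
      intro x
      have := (hσdiff (x * h)).hasDerivAt.scomp x ((hasDerivAt_id x).mul_const h)
      simpa [Function.comp_def] using this
    have hψ : ∀ x : ℝ, HasDerivAt
        (fun u => y₀ + h • ∑ j ∈ Finset.range s, (∫ t in (0:ℝ)..u, legendreP j t) • γ j)
        (h • ∑ j ∈ Finset.range s, legendreP j x • γ j) x := by
      intro x
      have hsum : HasDerivAt
          (fun u => ∑ j ∈ Finset.range s, (∫ t in (0:ℝ)..u, legendreP j t) • γ j)
          (∑ j ∈ Finset.range s, legendreP j x • γ j) x :=
        HasDerivAt.fun_sum fun j _ => (legendreP_primitive_hasDerivAt j x).smul_const (γ j)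
      exact (hsum.const_smul h).const_add y₀
    have h1 : derivWithin (fun u => σ (u * h)) (Set.Icc 0 1) c = h • deriv σ (c * h) :=
      ((hφ c).hasDerivWithinAt).derivWithin (uniqueDiffOn_Icc_zero_one c hc)
    have h2 : derivWithin
        (fun u => y₀ + h • ∑ j ∈ Finset.range s, (∫ t in (0:ℝ)..u, legendreP j t) • γ j)
        (Set.Icc 0 1) c = h • ∑ j ∈ Finset.range s, legendreP j c • γ j :=
      ((hψ c).hasDerivWithinAt).derivWithin (uniqueDiffOn_Icc_zero_one c hc)
    have h3 := derivWithin_congr hσeq (hσeq c hc)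
    rw [h1, h2] at h3
    exact smul_right_injective E hh.ne' h3
  -- Step B/C/D : FTC and change of variables
  have key : σ h - y h =
      h • ∫ τ in (0:ℝ)..1, (Φ (h, τ * h)) (deriv σ (τ * h) - f (σ (τ * h))) := by
    have hgderiv : ∀ t ∈ Set.uIcc (0:ℝ) h, HasDerivAt (fun t => F h t (σ t))
        ((Φ (h, t)) (deriv σ t - f (σ t))) t := by
      intro t ht
      rw [Set.uIcc_of_le hh.le] at ht
      have hF := hFderiv h ⟨hh.le, le_rfl⟩ t ht
      have hc : HasDerivAt (fun t : ℝ => (t, σ t)) (1, deriv σ t) t :=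
        (hasDerivAt_id t).prodMk (hσdiff t).hasDerivAt
      have := hF.comp_hasDerivAt t hc
      simpa [map_sub, Function.comp_def] using this
    have hcont' : Continuous fun t => (Φ (h, t)) (deriv σ t - f (σ t)) :=
      (hΦ.comp (continuous_const.prodMk continuous_id)).clm_apply
        (hvcont.sub (hf.comp hσ.continuous))
    have hFTC := intervalIntegral.integral_eq_sub_of_hasDerivAt hgderiv
        (hcont'.intervalIntegrable 0 h)
    have hchg := intervalIntegral.smul_integral_comp_mul_right
        (a := 0) (b := 1) (fun t => (Φ (h, t)) (deriv σ t - f (σ t))) h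
    simp only [zero_mul, one_mul] at hchg
    rw [hchg, hFTC, hFid h ⟨hh.le, le_rfl⟩ (σ h), hσ0, hy h]
  -- notation
  set A : ℕ → E →L[ℝ] E := fun j => ∫ τ in (0:ℝ)..1, legendreP j τ • Φ (h, τ * h) with hA
  set D : E := ∫ τ in (0:ℝ)..1, (Φ (h, τ * h)) (f (σ (τ * h)) - deriv σ (τ * h)) with hD
  have hΦc : Continuous fun τ : ℝ => Φ (h, τ * h) :=
    hΦ.comp (continuous_const.prodMk (continuous_id.mul continuous_const))
  have hfσc : Continuous fun τ : ℝ => f (σ (τ * h)) :=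
    hf.comp (hσ.continuous.comp (continuous_id.mul continuous_const))
  have hvτc : Continuous fun τ : ℝ => deriv σ (τ * h) :=
    hvcont.comp (continuous_id.mul continuous_const)
  have keyD : σ h - y h = (-h) • D := by
    have hnegD : (∫ τ in (0:ℝ)..1, (Φ (h, τ * h)) (deriv σ (τ * h) - f (σ (τ * h)))) = -D := by
      rw [hD, ← intervalIntegral.integral_neg]
      congr 1
      funext τ
      rw [← map_neg, neg_sub]
    rw [key, hnegD, smul_neg, ← neg_smul]
  -- a uniform bound for the propagator on [0,1]
  obtain ⟨M, hM⟩ := (isCompact_Icc (a := (0:ℝ)) (b := 1)).exists_bound_of_continuousOn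
    hΦc.continuousOn
  set M' : ℝ := max M 0 with hM'
  have hM'0 : 0 ≤ M' := le_max_right _ _
  have hM'b : ∀ τ ∈ Set.Icc (0:ℝ) 1, ‖Φ (h, τ * h)‖ ≤ M' :=
    fun τ hτ => le_trans (hM τ hτ) (le_max_left _ _)
  -- the partial sums over Ico s n
  set S : ℕ → E := fun n => ∑ j ∈ Finset.Ico s n, (A j) (γ j) with hS
  have hSn : ∀ n, s ≤ n → S n = ∫ τ in (0:ℝ)..1,
      (Φ (h, τ * h)) ((∑ j ∈ Finset.range n, legendreP j τ • γ j) - deriv σ (τ * h)) := by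
    intro n hn
    have hSstep : S n = ∫ τ in (0:ℝ)..1,
        (Φ (h, τ * h)) (∑ j ∈ Finset.Ico s n, legendreP j τ • γ j) := by
      have hrfl : S n = ∑ j ∈ Finset.Ico s n, (A j) (γ j) := rfl
      rw [hrfl]
      have h2 : ∀ j ∈ Finset.Ico s n, (A j) (γ j)
          = ∫ τ in (0:ℝ)..1, legendreP j τ • (Φ (h, τ * h)) (γ j) := by
        intro j _
        rw [hA]
        rw [ContinuousLinearMap.intervalIntegral_apply
          (((legendreP_continuous j).fun_smul hΦc).intervalIntegrable 0 1) (γ j)]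
        simp [ContinuousLinearMap.smul_apply]
      rw [Finset.sum_congr rfl h2,
        ← intervalIntegral.integral_finset_sum (fun j _ =>
          ((legendreP_continuous j).fun_smul (hΦc.clm_apply continuous_const)).intervalIntegrable 0 1)]
      congr 1
      funext τ
      rw [map_sum]
      congr 1
      funext j
      rw [map_smul]
    rw [hSstep]
    apply intervalIntegral.integral_congr
    intro τ hτ
    rw [Set.uIcc_of_le zero_le_one] at hτ
    show (Φ (h, τ * h)) (∑ j ∈ Finset.Ico s n, legendreP j τ • γ j)
        = (Φ (h, τ * h)) ((∑ j ∈ Finset.range n, legendreP j τ • γ j) - deriv σ (τ * h))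
    rw [hvE τ hτ, ← Finset.sum_Ico_eq_sub _ hn]
  have hDlim : Filter.Tendsto S Filter.atTop (nhds D) := by
    rw [Metric.tendsto_atTop]
    intro ε hε
    have hε' : 0 < ε / (M' + 1) := by positivity
    have hu := (Metric.tendstoUniformlyOn_iff.mp hunif) (ε / (M' + 1)) hε'
    rw [Filter.eventually_atTop] at hu
    obtain ⟨N, hN⟩ := hu
    refine ⟨max N s, fun n hn => ?_⟩
    have hns : s ≤ n := le_trans (le_max_right _ _) hn
    have hnN : N ≤ n := le_trans (le_max_left _ _) hn
    have hDS : D - S n = ∫ τ in (0:ℝ)..1,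
        (Φ (h, τ * h)) (f (σ (τ * h)) - ∑ j ∈ Finset.range n, legendreP j τ • γ j) := by
      rw [hSn n hns, hD, ← intervalIntegral.integral_sub]
      · congr 1
        funext τ
        rw [← map_sub]
        congr 1
        abel
      · exact ((hΦc.clm_apply (hfσc.sub hvτc))).intervalIntegrable 0 1
      · exact (hΦc.clm_apply (((continuous_finset_sum _ fun j _ =>
          (legendreP_continuous j).smul continuous_const)).sub hvτc)).intervalIntegrable 0 1
    have hbound : ‖D - S n‖ ≤ (M' * (ε / (M' + 1))) * |1 - (0:ℝ)| := by
      rw [hDS]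
      apply intervalIntegral.norm_integral_le_of_norm_le_const
      intro τ hτ
      have hτ' : τ ∈ Set.Icc (0:ℝ) 1 := by
        rw [Set.uIoc_of_le zero_le_one] at hτ
        exact Set.Ioc_subset_Icc_self hτ
      calc ‖(Φ (h, τ * h)) (f (σ (τ * h)) - ∑ j ∈ Finset.range n, legendreP j τ • γ j)‖
          ≤ ‖Φ (h, τ * h)‖ * ‖f (σ (τ * h)) - ∑ j ∈ Finset.range n, legendreP j τ • γ j‖ :=
            (Φ (h, τ * h)).le_opNorm _
        _ ≤ M' * (ε / (M' + 1)) := by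
            apply mul_le_mul (hM'b τ hτ') _ (norm_nonneg _) hM'0
            have := hN n hnN τ hτ'
            rw [dist_eq_norm] at this
            exact this.le
    rw [dist_eq_norm, ← norm_neg, neg_sub]
    calc ‖D - S n‖ ≤ (M' * (ε / (M' + 1))) * |1 - (0:ℝ)| := hbound
      _ = M' * (ε / (M' + 1)) := by norm_num
      _ < (M' + 1) * (ε / (M' + 1)) := by
          apply mul_lt_mul_of_pos_right _ hε'
          linarith
      _ = ε := by field_simp
  -- summability
  have hρρ : (1:ℝ) < ρ * ρ₁ := by nlinarith
  set r : ℝ := (ρ * ρ₁)⁻¹ with hr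
  have hr1 : ‖r‖ < 1 := by
    rw [hr, Real.norm_eq_abs, abs_of_pos (by positivity)]
    rw [inv_lt_one_iff₀]
    right; exact hρρ
  have hsum0 : Summable (fun j : ℕ => (2 * (j:ℝ) + 1) * r ^ j) := by
    have h1 := summable_pow_mul_geometric_of_norm_lt_one 1 hr1
    have h2 := summable_geometric_of_norm_lt_one hr1
    have := (h1.mul_left 2).add h2
    refine this.congr fun j => ?_
    push_cast
    ring
  have hteq : ∀ k : ℕ, (2 * ((s:ℝ) + k) + 1) / (ρ * ρ₁) ^ (s + k)
      = (2 * ((k + s : ℕ):ℝ) + 1) * r ^ (k + s) := by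
    intro k
    rw [add_comm s k, div_eq_mul_inv, ← inv_pow]
    push_cast
    ring
  have hsumt : Summable (fun k : ℕ => (2 * ((s:ℝ) + k) + 1) / (ρ * ρ₁) ^ (s + k)) := by
    have := (summable_nat_add_iff (f := fun j : ℕ => (2 * (j:ℝ) + 1) * r ^ j) s).2 hsum0
    refine this.congr fun k => ?_
    rw [← hteq k]
  -- termwise bound
  have hterm : ∀ k : ℕ, ‖(A (s + k)) (γ (s + k))‖ ≤
      κ * κ₁ * ((2 * ((s:ℝ) + k) + 1) / (ρ * ρ₁) ^ (s + k)) := by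
    intro k
    have hsq : Real.sqrt (2 * ((s + k : ℕ):ℝ) + 1) * Real.sqrt (2 * ((s + k : ℕ):ℝ) + 1)
        = 2 * ((s + k : ℕ):ℝ) + 1 := Real.mul_self_sqrt (by positivity)
    calc ‖(A (s + k)) (γ (s + k))‖ ≤ ‖A (s + k)‖ * ‖γ (s + k)‖ :=
          (A (s + k)).le_opNorm (γ (s + k))
      _ ≤ (κ₁ * Real.sqrt (2 * ((s + k : ℕ):ℝ) + 1) / ρ₁ ^ (s + k)) *
          (κ * Real.sqrt (2 * ((s + k : ℕ):ℝ) + 1) / ρ ^ (s + k)) := by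
          apply mul_le_mul (hΦbound (s + k)) (hγbound (s + k)) (norm_nonneg _) (by positivity)
      _ = κ * κ₁ * ((2 * ((s + k : ℕ):ℝ) + 1) / (ρ * ρ₁) ^ (s + k)) := by
          rw [mul_pow, div_mul_div_comm]
          rw [show (κ₁ * Real.sqrt (2 * ((s + k : ℕ):ℝ) + 1)) *
              (κ * Real.sqrt (2 * ((s + k : ℕ):ℝ) + 1)) =
              κ * κ₁ * (Real.sqrt (2 * ((s + k : ℕ):ℝ) + 1) *
                Real.sqrt (2 * ((s + k : ℕ):ℝ) + 1)) by ring, hsq]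
          rw [mul_comm (ρ₁ ^ (s + k)) (ρ ^ (s + k))]
          ring
      _ = κ * κ₁ * ((2 * ((s:ℝ) + k) + 1) / (ρ * ρ₁) ^ (s + k)) := by push_cast; ring_nf
  have hsumb : Summable (fun k : ℕ => ‖(A (s + k)) (γ (s + k))‖) :=
    Summable.of_nonneg_of_le (fun k => norm_nonneg _) hterm (hsumt.mul_left (κ * κ₁))
  have hsumB : Summable (fun k : ℕ => (A (s + k)) (γ (s + k))) := hsumb.of_norm
  -- identify D with the tsum
  have htsum : ∑' k : ℕ, (A (s + k)) (γ (s + k)) = D := by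
    have hb := hsumB.hasSum.tendsto_sum_nat
    have hcomp : Filter.Tendsto (fun m : ℕ => s + m) Filter.atTop Filter.atTop := by
      simpa [add_comm] using Filter.tendsto_add_atTop_nat s
    have h1 : Filter.Tendsto (fun m => S (s + m)) Filter.atTop (nhds D) := hDlim.comp hcomp
    have h2 : ∀ m : ℕ, S (s + m) = ∑ k ∈ Finset.range m, (A (s + k)) (γ (s + k)) := by
      intro m
      have hrfl : S (s + m) = ∑ j ∈ Finset.Ico s (s + m), (A j) (γ j) := rfl
      rw [hrfl, Finset.sum_Ico_eq_sum_range]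
      simp
    refine tendsto_nhds_unique hb ?_
    refine h1.congr fun m => (h2 m)
  -- final estimate
  have hnormD : ‖D‖ ≤ κ * κ₁ * ∑' j : ℕ, (2 * ((s:ℝ) + j) + 1) / (ρ * ρ₁) ^ (s + j) := by
    rw [← htsum]
    calc ‖∑' k : ℕ, (A (s + k)) (γ (s + k))‖ ≤ ∑' k : ℕ, ‖(A (s + k)) (γ (s + k))‖ :=
          norm_tsum_le_tsum_norm hsumb
      _ ≤ ∑' k : ℕ, κ * κ₁ * ((2 * ((s:ℝ) + k) + 1) / (ρ * ρ₁) ^ (s + k)) :=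
          Summable.tsum_le_tsum hterm hsumb (hsumt.mul_left (κ * κ₁))
      _ = κ * κ₁ * ∑' j : ℕ, (2 * ((s:ℝ) + j) + 1) / (ρ * ρ₁) ^ (s + j) := tsum_mul_left
  have hnorm : ‖σ h - y h‖ = h * ‖D‖ := by
    rw [keyD, norm_smul, Real.norm_eq_abs, abs_neg, abs_of_pos hh]
  rw [hnorm]
  calc h * ‖D‖ ≤ h * (κ * κ₁ * ∑' j : ℕ, (2 * ((s:ℝ) + j) + 1) / (ρ * ρ₁) ^ (s + j)) :=
        mul_le_mul_of_nonneg_left hnormD hh.le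
    _ = h * κ * κ₁ * ∑' j : ℕ, (2 * ((s:ℝ) + j) + 1) / (ρ * ρ₁) ^ (s + j) := by ring
end
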